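/- With the notation of the equiangular update, the squared norm of the difference of equiangular directions satisfies ‖v_{new} - v_{old}‖₂² = (s_k - u^⊤G^{-1}s_A)² / (x_j^⊤(I-P_A)x_j), provided s_k - u^⊤G^{-1}s_A ≠ 0. -/

import Mathlib

open Matrix

/-! The residual `r = (1 - P_A) x_j` is orthogonal to the columns of `X_A` and satisfies
`x_j ⬝ r = r ⬝ r =: d`. With `α = s_k - uᵀ G⁻¹ s_A`, the vector `v = v_old + (α / d) r` lies in
the column space of `[X_A, x_j]` and has correlations `s_A` with `X_A` and `s_k` with `x_j`.
Since `X (XᵀX)⁻¹ s` is the only vector of the column space of `X` whose correlations with the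
columns are `s`, `v_new = v`, so `‖v_new - v_old‖² = (α / d)² (r ⬝ r) = α² / d`. -/

namespace Matrix

variable {ι κ R K : Type*} [CommRing R] [Field K]

lemma fromCols_replicateCol_mulVec_sumElim [Fintype κ] (X : Matrix ι κ R) (x : ι → R)
    (w : κ → R) (β : R) :
    fromCols X (replicateCol (Fin 1) x) *ᵥ Sum.elim w (fun _ => β) = X *ᵥ w + β • x := by
  rw [fromCols_mulVec_sumElim]
  congr 1
  ext i
  simp [mulVec, dotProduct, mul_comm]

lemma transpose_fromCols_replicateCol_mulVec [Fintype ι] {ι' : Type*} (X : Matrix ι κ R)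
    (x v : ι → R) :
    (fromCols X (replicateCol ι' x))ᵀ *ᵥ v = Sum.elim (Xᵀ *ᵥ v) (fun _ => x ⬝ᵥ v) := by
  rw [transpose_fromCols, fromRows_mulVec, transpose_replicateCol, replicateRow_mulVec_eq_const]
  rfl

lemma mulVec_dotProduct_eq_zero [Fintype ι] [Fintype κ] {X : Matrix ι κ R} {r : ι → R}
    (hr : Xᵀ *ᵥ r = 0) (y : κ → R) : (X *ᵥ y) ⬝ᵥ r = 0 := by
  rw [dotProduct_comm, dotProduct_mulVec, ← mulVec_transpose, hr, zero_dotProduct]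

variable [Fintype ι] [Fintype κ] [DecidableEq κ]

lemma inv_transpose_mul_self_mulVec_transpose_mulVec_mulVec {X : Matrix ι κ R}
    (hX : IsUnit (Xᵀ * X)) (w : κ → R) : (Xᵀ * X)⁻¹ *ᵥ (Xᵀ *ᵥ (X *ᵥ w)) = w := by
  rw [mulVec_mulVec, mulVec_mulVec, Matrix.mul_assoc,
    nonsing_inv_mul _ ((isUnit_iff_isUnit_det _).mp hX), one_mulVec]

lemma transpose_mulVec_mulVec_inv_transpose_mul_self_mulVec {X : Matrix ι κ R}
    (hX : IsUnit (Xᵀ * X)) (w : κ → R) : Xᵀ *ᵥ (X *ᵥ ((Xᵀ * X)⁻¹ *ᵥ w)) = w := by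
  rw [mulVec_mulVec, mulVec_mulVec, mul_nonsing_inv _ ((isUnit_iff_isUnit_det _).mp hX),
    one_mulVec]

noncomputable def colProj (X : Matrix ι κ R) : Matrix ι ι R := X * (Xᵀ * X)⁻¹ * Xᵀ

lemma colProj_mulVec (X : Matrix ι κ R) (x : ι → R) :
    colProj X *ᵥ x = X *ᵥ ((Xᵀ * X)⁻¹ *ᵥ (Xᵀ *ᵥ x)) := by
  rw [colProj, mulVec_mulVec, mulVec_mulVec, Matrix.mul_assoc]

variable [DecidableEq ι]

lemma one_sub_colProj_mulVec (X : Matrix ι κ R) (x : ι → R) :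
    (1 - colProj X) *ᵥ x = x - X *ᵥ ((Xᵀ * X)⁻¹ *ᵥ (Xᵀ *ᵥ x)) := by
  rw [sub_mulVec, one_mulVec, colProj_mulVec]

lemma transpose_mulVec_one_sub_colProj_mulVec {X : Matrix ι κ R} (hX : IsUnit (Xᵀ * X))
    (x : ι → R) : Xᵀ *ᵥ ((1 - colProj X) *ᵥ x) = 0 := by
  rw [one_sub_colProj_mulVec, mulVec_sub,
    transpose_mulVec_mulVec_inv_transpose_mul_self_mulVec hX, sub_self]

lemma dotProduct_one_sub_colProj_mulVec {X : Matrix ι κ R} (hX : IsUnit (Xᵀ * X))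
    (x : ι → R) :
    x ⬝ᵥ ((1 - colProj X) *ᵥ x) = ((1 - colProj X) *ᵥ x) ⬝ᵥ ((1 - colProj X) *ᵥ x) := by
  set r := (1 - colProj X) *ᵥ x
  calc x ⬝ᵥ r = x ⬝ᵥ r - (X *ᵥ ((Xᵀ * X)⁻¹ *ᵥ (Xᵀ *ᵥ x))) ⬝ᵥ r := by
        rw [mulVec_dotProduct_eq_zero (transpose_mulVec_one_sub_colProj_mulVec hX x), sub_zero]
    _ = r ⬝ᵥ r := by rw [← sub_dotProduct, ← one_sub_colProj_mulVec]

theorem fromCols_replicateCol_mulVec_inv_mulVec_sumElim {X : Matrix ι κ K} {x : ι → K}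
    (hY : IsUnit ((fromCols X (replicateCol (Fin 1) x))ᵀ * fromCols X (replicateCol (Fin 1) x)))
    (hX : IsUnit (Xᵀ * X)) (hd : x ⬝ᵥ ((1 - colProj X) *ᵥ x) ≠ 0) (s : κ → K) (c : K) :
    fromCols X (replicateCol (Fin 1) x) *ᵥ
        ((fromCols X (replicateCol (Fin 1) x))ᵀ * fromCols X (replicateCol (Fin 1) x))⁻¹ *ᵥ
          Sum.elim s (fun _ => c)
      = X *ᵥ ((Xᵀ * X)⁻¹ *ᵥ s)
        + ((c - (Xᵀ *ᵥ x) ⬝ᵥ (Xᵀ * X)⁻¹ *ᵥ s) / x ⬝ᵥ ((1 - colProj X) *ᵥ x))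
          • ((1 - colProj X) *ᵥ x) := by
  set Y := fromCols X (replicateCol (Fin 1) x)
  set r := (1 - colProj X) *ᵥ x with hr
  set t := (c - (Xᵀ *ᵥ x) ⬝ᵥ (Xᵀ * X)⁻¹ *ᵥ s) / x ⬝ᵥ r
  set v := X *ᵥ ((Xᵀ * X)⁻¹ *ᵥ s) + t • r with hv_def
  have hv : Y *ᵥ Sum.elim ((Xᵀ * X)⁻¹ *ᵥ s - t • (Xᵀ * X)⁻¹ *ᵥ (Xᵀ *ᵥ x)) (fun _ => t) = v := by
    rw [fromCols_replicateCol_mulVec_sumElim, mulVec_sub, mulVec_smul, hv_def, hr,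
      one_sub_colProj_mulVec]
    module
  have hXv : Xᵀ *ᵥ v = s := by
    rw [mulVec_add, mulVec_smul, transpose_mulVec_one_sub_colProj_mulVec hX, smul_zero, add_zero,
      transpose_mulVec_mulVec_inv_transpose_mul_self_mulVec hX]
  have hxv : x ⬝ᵥ v = c := by
    rw [dotProduct_add, dotProduct_mulVec, ← mulVec_transpose, dotProduct_smul, smul_eq_mul,
      div_mul_cancel₀ _ hd]
    ring
  have hYv : Yᵀ *ᵥ v = Sum.elim s (fun _ => c) := by
    rw [transpose_fromCols_replicateCol_mulVec, hXv, hxv]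
  rw [← hYv, ← hv, inv_transpose_mul_self_mulVec_transpose_mulVec_mulVec hY]

end Matrix

theorem equiangular_difference_norm_sq_general (n m : ℕ)
    (XA : Matrix (Fin n) (Fin m) ℝ) (xj : Fin n → ℝ)
    (Xfull : Matrix (Fin n) (Fin m ⊕ Fin 1) ℝ)
    (hXfull : Xfull = fun i k => Sum.elim (fun j => XA i j) (fun _ => xj i) k)
    (hfull : IsUnit (Xfullᵀ * Xfull))
    (G : Matrix (Fin m) (Fin m) ℝ) (hG : G = XAᵀ * XA) (hGunit : IsUnit G)
    (u : Fin m → ℝ) (hu : u = XAᵀ.mulVec xj)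
    (PA : Matrix (Fin n) (Fin n) ℝ) (hPA : PA = XA * G⁻¹ * XAᵀ)
    (hproj : (1 - PA).mulVec xj ≠ 0)
    (sA : Fin m → ℝ)
    (sk : ℝ)
    (vold vnew : Fin n → ℝ)
    (hvold : vold = XA.mulVec (G⁻¹.mulVec sA))
    (hvnew : vnew = Xfull.mulVec ((Xfullᵀ * Xfull)⁻¹.mulVec (Sum.elim sA (fun _ => sk)))) :
    (vnew - vold) ⬝ᵥ (vnew - vold)
      = (sk - u ⬝ᵥ G⁻¹.mulVec sA) ^ 2 / (xj ⬝ᵥ (1 - PA).mulVec xj) := by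
  obtain rfl : Xfull = fromCols XA (replicateCol (Fin 1) xj) := hXfull
  obtain rfl : PA = colProj XA := by rw [hPA, hG]; rfl
  subst hG hu hvold hvnew
  have hd : xj ⬝ᵥ ((1 - colProj XA) *ᵥ xj) ≠ 0 := by
    rw [dotProduct_one_sub_colProj_mulVec hGunit]
    exact mt dotProduct_self_eq_zero.mp hproj
  rw [fromCols_replicateCol_mulVec_inv_mulVec_sumElim hfull hGunit hd, add_sub_cancel_left,
    smul_dotProduct, dotProduct_smul, ← dotProduct_one_sub_colProj_mulVec hGunit, smul_eq_mul,
    smul_eq_mul]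
  field_simp

/-- Squared norm of the difference of equiangular directions:
`‖v_new - v_old‖₂² = (s_k - uᵀ G⁻¹ s_A)² / (x_jᵀ (I - P_A) x_j)`. -/
theorem equiangular_difference_norm_sq (n m : ℕ) (hn : 1 ≤ n) (hm : 1 ≤ m)
    (XA : Matrix (Fin n) (Fin m) ℝ) (xj : Fin n → ℝ)
    (Xfull : Matrix (Fin n) (Fin m ⊕ Fin 1) ℝ)
    (hXfull : Xfull = fun i k => Sum.elim (fun j => XA i j) (fun _ => xj i) k)
    (hfull : IsUnit (Xfullᵀ * Xfull))
    (G : Matrix (Fin m) (Fin m) ℝ) (hG : G = XAᵀ * XA) (hGunit : IsUnit G)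
    (u : Fin m → ℝ) (hu : u = XAᵀ.mulVec xj)
    (PA : Matrix (Fin n) (Fin n) ℝ) (hPA : PA = XA * G⁻¹ * XAᵀ)
    (hproj : (1 - PA).mulVec xj ≠ 0)
    (sA : Fin m → ℝ) (hsA : ∀ i, sA i = 1 ∨ sA i = -1)
    (sk : ℝ) (hsk : sk = 1 ∨ sk = -1)
    (hden : sk - u ⬝ᵥ G⁻¹.mulVec sA ≠ 0)
    (vold vnew : Fin n → ℝ)
    (hvold : vold = XA.mulVec (G⁻¹.mulVec sA))
    (hvnew : vnew = Xfull.mulVec ((Xfullᵀ * Xfull)⁻¹.mulVec (Sum.elim sA (fun _ => sk)))) :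
    (vnew - vold) ⬝ᵥ (vnew - vold)
      = (sk - u ⬝ᵥ G⁻¹.mulVec sA) ^ 2 / (xj ⬝ᵥ (1 - PA).mulVec xj) :=
  equiangular_difference_norm_sq_general n m XA xj Xfull hXfull hfull G hG hGunit u hu PA hPA hproj
    sA sk vold vnew hvold hvnew
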